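/- arXiv:1506.01476 — 3 statements merged into one kernel-verified Lean document; each statement's English description precedes it below -/
import Mathlib

section
/- Let D be a nonempty set and let F be a finite family of subsets of D. Then there exists a subset D₀ of D with |D₀| ≤ |F| - 1 such that for all X, Y in F with X ≠ Y, we have X ∩ D₀ ≠ Y ∩ D₀ (equivalently, D₀ meets the symmetric difference of every two distinct members of F). -/
/-!
Choose a point `d` lying in exactly one of two distinct members of `F` and split `F` into the
part `F₁` of members containing `d` and the part `F₂` of those avoiding it. Both parts are proper and nonempty; by induction
each is separated by a set of size at most its size minus one, and adding `d` to the union of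
these two sets separates all of `F` with at most `(|F₁| - 1) + (|F₂| - 1) + 1 = |F| - 1` points.
-/

open Finset

section
variable {α : Type*}

theorem Set.InjOn.inter_mono {S : Set (Set α)} {D D' : Set α}
    (h : S.InjOn (· ∩ D)) (hDD' : D ⊆ D') : S.InjOn (· ∩ D') := by
  intro X hX Y hY hXY
  apply h hX hY
  simp only at hXY ⊢
  rw [← Set.inter_eq_right.mpr hDD', ← Set.inter_assoc, hXY, Set.inter_assoc]

theorem injOn_inter_insert_of_injOn_sep {S : Set (Set α)} {d : α} {D₁ D₂ : Set α}
    (h₁ : {X ∈ S | d ∈ X}.InjOn (· ∩ D₁)) (h₂ : {X ∈ S | d ∉ X}.InjOn (· ∩ D₂)) :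
    S.InjOn (· ∩ insert d (D₁ ∪ D₂)) := by
  intro X hX Y hY hXY
  have hd : d ∈ X ↔ d ∈ Y := by
    simpa using congrArg (d ∈ ·) hXY
  by_cases hdX : d ∈ X
  · exact (h₁.inter_mono (by grind)) ⟨hX, hdX⟩ ⟨hY, hd.1 hdX⟩ hXY
  · exact (h₂.inter_mono (by grind)) ⟨hX, hdX⟩ ⟨hY, mt hd.2 hdX⟩ hXY

theorem Finset.exists_card_le_injOn_inter (F : Finset (Set α)) :
    ∃ D₀ : Finset α, #D₀ ≤ #F - 1 ∧ (F : Set (Set α)).InjOn (· ∩ ↑D₀) := by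
  classical
  induction F using Finset.strongInduction with
  | H F ih =>
  rcases (F : Set (Set α)).subsingleton_or_nontrivial with
    hF | ⟨X, hX, Y, hY, hXY⟩
  · exact ⟨∅, by simp, hF.injOn _⟩
  obtain ⟨d, A, hA, hdA, B, hB, hdB⟩ : ∃ d, ∃ A ∈ F, d ∈ A ∧ ∃ B ∈ F, d ∉ B := by
    obtain ⟨d, hd | hd⟩ := Set.symmDiff_nonempty.mpr hXY
    exacts [⟨d, X, hX, hd.1, Y, hY, hd.2⟩, ⟨d, Y, hY, hd.1, X, hX, hd.2⟩]
  have hcard : #(F.filter (d ∈ ·)) + #(F.filter (d ∉ ·)) = #F :=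
    card_filter_add_card_filter_not _
  have hF₁ : 0 < #(F.filter (d ∈ ·)) := card_pos.mpr ⟨A, mem_filter.mpr ⟨hA, hdA⟩⟩
  have hF₂ : 0 < #(F.filter (d ∉ ·)) := card_pos.mpr ⟨B, mem_filter.mpr ⟨hB, hdB⟩⟩
  obtain ⟨D₁, hD₁card, hD₁⟩ :=
    ih (F.filter (d ∈ ·)) (filter_ssubset.mpr ⟨B, hB, hdB⟩)
  obtain ⟨D₂, hD₂card, hD₂⟩ :=
    ih (F.filter (d ∉ ·)) (filter_ssubset.mpr ⟨A, hA, not_not.mpr hdA⟩)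
  refine ⟨insert d (D₁ ∪ D₂), ?_, ?_⟩
  · calc #(insert d (D₁ ∪ D₂)) ≤ #(D₁ ∪ D₂) + 1 := card_insert_le _ _
      _ ≤ #D₁ + #D₂ + 1 := by grw [card_union_le]
      _ ≤ #F - 1 := by omega
  · push_cast
    exact injOn_inter_insert_of_injOn_sep (by simpa using hD₁) (by simpa using hD₂)

end

theorem stmt_0_general {α : Type*} (F : Finset (Set α)) :
    ∃ D₀ : Finset α, D₀.card ≤ F.card - 1 ∧
      ∀ X ∈ F, ∀ Y ∈ F, X ≠ Y → X ∩ ↑D₀ ≠ Y ∩ ↑D₀ := by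
  obtain ⟨D₀, hcard, hinj⟩ := F.exists_card_le_injOn_inter
  exact ⟨D₀, hcard, fun X hX Y hY hXY h => hXY (hinj hX hY h)⟩

/-- For a finite family `F` of subsets of a nonempty type, there is a finite
"distinguishing" set `D₀` of size at most `|F| - 1` such that distinct members
of `F` have distinct intersections with `D₀`. -/
theorem stmt_0 {α : Type*} [Nonempty α] (F : Finset (Set α)) :
    ∃ D₀ : Finset α, D₀.card ≤ F.card - 1 ∧
      ∀ X ∈ F, ∀ Y ∈ F, X ≠ Y → X ∩ ↑D₀ ≠ Y ∩ ↑D₀ :=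
  stmt_0_general F
end

section
/- Let D be a set, A ⊆ pow(D), l > 0, D* ⊆ D, and suppose for each set variable X in a finite family V₁' we have MX ⊆ D and M*X = MX ∩ D*, satisfying: M*X = MX whenever |MX| ≤ l, and |M*X| > l otherwise; and (MX Δ MY) ∩ D* ≠ ∅ whenever MX ≠ MY for X, Y ∈ V₁'. Define M*A as in the relativized interpretation. Then for every X ∈ V₁': MX ∈ A if and only if M*X ∈ M*A. -/
/-!
`MX ∈ A` puts `M*X` into `M*A` through the middle clause. Conversely, `M*X` is excluded
from the first clause, so it enters `M*A` either as some `M*Y` with `MY ∈ A`, and then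
`MX = MY` because distinct values already differ inside `D*`; or as a small subset of
`V₀*` lying in `A`, and then `|M*X| ≤ l` forces `MX` to be small, whence `M*X = MX`.
-/

open Set
open scoped symmDiff

theorem eq_of_inter_eq_of_symmDiff_inter_nonempty {α : Type*} {s t D : Set α}
    (hsep : s ≠ t → ((s \ t ∪ t \ s) ∩ D).Nonempty) (hst : s ∩ D = t ∩ D) : s = t := by
  by_contra hne
  have hsep := hsep hne
  rw [show s \ t ∪ t \ s = s ∆ t from rfl, inter_symmDiff_distrib_right, hst,
    symmDiff_self] at hsep
  exact not_nonempty_empty hsep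

theorem eq_of_mk_le_of_relativization {α : Type*} {s sstar : Set α} {l : ℕ}
    (hsize : (Cardinal.mk s ≤ l → sstar = s) ∧ (l < Cardinal.mk s → l < Cardinal.mk sstar))
    (hsmall : Cardinal.mk sstar ≤ l) : sstar = s :=
  hsize.1 (not_lt.1 fun hbig => (hsize.2 hbig).not_ge hsmall)

theorem stmt_6_general {α : Type*} {ι : Type*} (Dstar : Set α)
    (V₀star : Finset α)
    (l : ℕ)
    (M Mstar : ι → Set α) (hrel : ∀ i, Mstar i = M i ∩ Dstar)
    (hsize : ∀ i, (Cardinal.mk (M i) ≤ (l : Cardinal) → Mstar i = M i) ∧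
      ((l : Cardinal) < Cardinal.mk (M i) → (l : Cardinal) < Cardinal.mk (Mstar i)))
    (hdelta : ∀ i j, M i ≠ M j → ((((M i) \ (M j)) ∪ ((M j) \ (M i))) ∩ Dstar).Nonempty)
    (A : Set (Set α))
    (MstarA : Set (Set α))
    (hMstarA : MstarA =
      ((A ∩ {S | S ⊆ Dstar}) \
        ({S | ∃ i, S = Mstar i} ∪ {S | S ⊆ ↑V₀star ∧ Cardinal.mk S ≤ (l : Cardinal)})) ∪
      {S | ∃ i, S = Mstar i ∧ M i ∈ A} ∪
      ({S | S ⊆ ↑V₀star ∧ Cardinal.mk S ≤ (l : Cardinal)} ∩ A)) :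
    ∀ i, M i ∈ A ↔ Mstar i ∈ MstarA := by
  intro i
  subst hMstarA
  refine ⟨fun hA => Or.inl (Or.inr ⟨i, rfl, hA⟩), ?_⟩
  rintro ((hfirst | ⟨j, hij, hjA⟩) | ⟨⟨-, hsmall⟩, hA⟩)
  · exact absurd (Or.inl ⟨i, rfl⟩) hfirst.2
  · have hMij : M i = M j :=
      eq_of_inter_eq_of_symmDiff_inter_nonempty (hdelta i j) (by rw [← hrel, ← hrel, hij])
    rwa [hMij]
  · rwa [← eq_of_mk_le_of_relativization (hsize i) hsmall]

/-- Part (c) of Lemma 3.2, for atomic formulae `X ∈ A`: under the conditions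
(c1) `M*X = MX` when `|MX| ≤ l` and `|M*X| > l` otherwise, and (c2) distinct
values are distinguished inside `D*`, membership in `A` is preserved by the
relativization `M*A`. -/
theorem stmt_6 {α : Type*} {ι : Type*} (Dstar : Set α)
    (V₀star : Finset α) (hV₀star : ↑V₀star ⊆ Dstar)
    (l : ℕ) (hl : 0 < l)
    (M Mstar : ι → Set α) (hrel : ∀ i, Mstar i = M i ∩ Dstar)
    (hsize : ∀ i, (Cardinal.mk (M i) ≤ (l : Cardinal) → Mstar i = M i) ∧
      ((l : Cardinal) < Cardinal.mk (M i) → (l : Cardinal) < Cardinal.mk (Mstar i)))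
    (hdelta : ∀ i j, M i ≠ M j → ((((M i) \ (M j)) ∪ ((M j) \ (M i))) ∩ Dstar).Nonempty)
    (A : Set (Set α))
    (MstarA : Set (Set α))
    (hMstarA : MstarA =
      ((A ∩ {S | S ⊆ Dstar}) \
        ({S | ∃ i, S = Mstar i} ∪ {S | S ⊆ ↑V₀star ∧ Cardinal.mk S ≤ (l : Cardinal)})) ∪
      {S | ∃ i, S = Mstar i ∧ M i ∈ A} ∪
      ({S | S ⊆ ↑V₀star ∧ Cardinal.mk S ≤ (l : Cardinal)} ∩ A)) :
    ∀ i, M i ∈ A ↔ Mstar i ∈ MstarA :=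
  stmt_6_general Dstar V₀star l M Mstar hrel hsize hdelta A MstarA hMstarA
end

section
/- Let Bₙ denote the n-th Bell number (the number of partitions of a set of n elements). Then for all sufficiently large n, (n/(e·ln n))^n < Bₙ < (0.792·n / ln(n+1))^n. -/
/-!
Lower bound: with `k = ⌈n / ln n⌉`, letting the first `k` points lie in distinct blocks and
placing the other `n - k` points freely gives `Bₙ ≥ k ^ (n - k)`, which beats
`(n / (e ln n)) ^ n` as soon as `(ln n)² ≤ n`.

Upper bound: a partition is determined by the idempotent map sending each point to the least
point of its block, so `Bₙ ≤ ∑_{M ⊆ [n]} |M| ^ (n - |M|) ≤ 2ⁿ · max_x x ^ (n - x)`.  Two tangent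
line bounds for `log` give `x ^ (n - x) ≤ (n / (e L)) ^ n · exp (exp (L - 1))` for every `L > 0`;
with `L = 0.95 ln n` the last factor is at most `exp (0.005 n)`, and `2 e^0.005 / (0.95 e) < 0.792`.
-/

/-- The `n`-th Bell number: the number of partitions of `{1,…,n}`. -/
noncomputable def bell (n : ℕ) : ℕ :=
  Nat.card {P : Finset (Finset (Fin n)) //
    (∀ b ∈ P, b.Nonempty) ∧
    (∀ b ∈ P, ∀ b' ∈ P, b ≠ b' → b ∩ b' = ∅) ∧
    P.sup id = Finset.univ}

open Finset Real

namespace Finpartition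

variable {α : Type*} [Fintype α] [DecidableEq α]

def equivPartsSubtype : Finpartition (univ : Finset α) ≃
    {P : Finset (Finset α) // (∀ b ∈ P, b.Nonempty) ∧
      (∀ b ∈ P, ∀ b' ∈ P, b ≠ b' → b ∩ b' = ∅) ∧ P.sup id = univ} where
  toFun Q := ⟨Q.parts, fun _ => Q.nonempty_of_mem_parts,
    fun _ hb _ hb' hne => disjoint_iff_inter_eq_empty.1 (Q.disjoint hb hb' hne), Q.sup_parts⟩
  invFun P :=
    { parts := P.1
      supIndep := supIndep_iff_pairwiseDisjoint.2 fun _ hb _ hb' hne =>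
        disjoint_iff_inter_eq_empty.2 (P.2.2.1 _ hb _ hb' hne)
      sup_parts := P.2.2.2
      bot_notMem := fun h => not_nonempty_empty (P.2.1 _ h) }
  left_inv _ := rfl
  right_inv _ := rfl

lemma rel_of_ofSetoid_eq {s t : Setoid α} [DecidableRel s.r] [DecidableRel t.r]
    (h : ofSetoid s = ofSetoid t) {a b : α} (hab : s a b) : t a b := by
  rwa [← mem_part_ofSetoid_iff_rel, ← h, mem_part_ofSetoid_iff_rel]

variable [LinearOrder α]

def minRep (P : Finpartition (univ : Finset α)) (a : α) : α :=
  (P.part a).min' (P.part_nonempty.2 (mem_univ a))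

lemma part_minRep (P : Finpartition (univ : Finset α)) (a : α) :
    P.part (P.minRep a) = P.part a :=
  P.part_eq_of_mem (P.part_mem.2 (mem_univ a)) (min'_mem _ _)

lemma minRep_eq_of_part_eq (P : Finpartition (univ : Finset α)) {a b : α}
    (h : P.part a = P.part b) : P.minRep a = P.minRep b := by
  unfold minRep
  congr 1

lemma minRep_minRep (P : Finpartition (univ : Finset α)) (a : α) :
    P.minRep (P.minRep a) = P.minRep a :=
  P.minRep_eq_of_part_eq (P.part_minRep a)

lemma mem_part_iff_minRep_eq (P : Finpartition (univ : Finset α)) {a b : α} :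
    b ∈ P.part a ↔ P.minRep b = P.minRep a := by
  rw [P.mem_part_iff_part_eq_part (mem_univ b) (mem_univ a)]
  refine ⟨P.minRep_eq_of_part_eq, fun h => ?_⟩
  rw [← part_minRep, h, part_minRep]

lemma minRep_injective : Function.Injective (minRep (α := α)) := by
  intro P Q h
  have hpart : P.part = Q.part := by
    ext a b
    rw [mem_part_iff_minRep_eq, mem_part_iff_minRep_eq, h]
  ext b
  constructor
  · intro hb
    obtain ⟨a, -, rfl⟩ := P.part_surjOn hb
    rw [hpart]
    exact Q.part_mem.2 (mem_univ a)
  · intro hb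
    obtain ⟨a, -, rfl⟩ := Q.part_surjOn hb
    rw [← hpart]
    exact P.part_mem.2 (mem_univ a)

end Finpartition

-- An idempotent map is determined by its image `M` and its values off `M`.
lemma card_idempotent_le_sum (α : Type*) [Fintype α] [DecidableEq α] :
    Nat.card {g : α → α // ∀ a, g (g a) = g a} ≤
      ∑ M : Finset α, #M ^ (Fintype.card α - #M) := by
  let encode (g : {g : α → α // ∀ a, g (g a) = g a}) :
      Σ M : Finset α, ({a // a ∉ M} → {a // a ∈ M}) :=
    ⟨univ.image g.1, fun a => ⟨g.1 a, mem_image_of_mem _ (mem_univ _)⟩⟩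
  have hencode : Function.Injective encode := by
    intro g g' h
    have himage : univ.image g.1 = univ.image g'.1 := congrArg Sigma.fst h
    have hrest : ∀ a (ha : a ∉ (encode g).1) (ha' : a ∉ (encode g').1),
        ((encode g).2 ⟨a, ha⟩ : α) = (encode g').2 ⟨a, ha'⟩ := by
      rw [h]; exact fun _ _ _ => rfl
    refine Subtype.ext (funext fun a => ?_)
    by_cases ha : a ∈ univ.image g.1
    · obtain ⟨b, -, rfl⟩ := mem_image.1 ha
      obtain ⟨b', -, hb'⟩ := mem_image.1 (himage ▸ ha)
      rw [g.2, ← hb', g'.2]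
    · exact hrest a ha (show a ∉ univ.image g'.1 from himage ▸ ha)
  refine (Nat.card_le_card_of_injective encode hencode).trans_eq ?_
  rw [Nat.card_eq_fintype_card, Fintype.card_sigma]
  refine sum_congr rfl fun M _ => ?_
  rw [Fintype.card_fun, Fintype.card_coe, Fintype.card_subtype_compl, Fintype.card_coe]

lemma bell_eq_card (n : ℕ) : bell n = Nat.card (Finpartition (univ : Finset (Fin n))) :=
  (Nat.card_congr Finpartition.equivPartsSubtype).symm

-- `f : Fin m → Fin k` yields the partition of `Fin (k + m)` into the fibres of `Fin.append id f`:
-- the first `k` points lie in distinct blocks, and the block of `k + i` is the one of `f i`.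
lemma pow_le_bell_add (k m : ℕ) : k ^ m ≤ bell (k + m) := by
  classical
  let P (f : Fin m → Fin k) : Finpartition (univ : Finset (Fin (k + m))) :=
    .ofSetoid (Setoid.ker (Fin.append id f))
  have hP : Function.Injective P := by
    intro f f' h
    funext i
    have := Finpartition.rel_of_ofSetoid_eq h
      (a := Fin.natAdd k i) (b := Fin.castAdd m (f i)) (by simp [Setoid.ker_def])
    simpa [Setoid.ker_def] using this.symm
  rw [bell_eq_card]
  simpa using Nat.card_le_card_of_injective P hP

lemma bell_le_sum_card_pow (n : ℕ) : bell n ≤ ∑ M : Finset (Fin n), #M ^ (n - #M) := by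
  rw [bell_eq_card]
  let g (P : Finpartition (univ : Finset (Fin n))) : {g : Fin n → Fin n // ∀ a, g (g a) = g a} :=
    ⟨P.minRep, P.minRep_minRep⟩
  have hg : Function.Injective g := fun P Q h =>
    Finpartition.minRep_injective (congrArg Subtype.val h)
  simpa using (Nat.card_le_card_of_injective g hg).trans (card_idempotent_le_sum (Fin n))

lemma mul_sub_log_le_exp {x : ℝ} (hx : 0 < x) (C : ℝ) : x * (C - log x) ≤ exp (C - 1) := by
  have h := add_one_le_exp (C - 1 - log x)
  rw [exp_sub _ (log x), exp_log hx] at h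
  have : x * (C - log x) ≤ x * (exp (C - 1) / x) := by gcongr; linarith
  rwa [mul_div_cancel₀ _ hx.ne'] at this

-- `log` lies below its tangent at `n / L`, and `x * (L - log x)` is maximal at `x = exp (L - 1)`.
lemma sub_mul_log_le {n L x : ℝ} (hn : 0 < n) (hL : 0 < L) (hx : 0 < x) :
    (n - x) * log x ≤ n * log (n / (exp 1 * L)) + exp (L - 1) := by
  have htangent : log x - log (n / L) ≤ x * L / n - 1 := by
    rw [← log_div hx.ne' (by positivity), div_div_eq_mul_div]
    exact log_le_sub_one_of_pos (by positivity)
  have hlog : log (n / (exp 1 * L)) = log (n / L) - 1 := by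
    rw [mul_comm, ← div_div, log_div (by positivity) (exp_pos 1).ne', log_exp]
  have hn_mul : n * (log x - log (n / L)) ≤ x * L - n := by
    calc n * (log x - log (n / L)) ≤ n * (x * L / n - 1) := by gcongr
      _ = x * L - n := by field_simp
  have := mul_sub_log_le_exp hx L
  rw [hlog]
  nlinarith

lemma natCast_pow_sub_le {n k : ℕ} (hk : k ≤ n) (hn : 0 < n) {L : ℝ} (hL : 0 < L) :
    (k : ℝ) ^ (n - k) ≤ (n / (exp 1 * L)) ^ n * exp (exp (L - 1)) := by
  rcases k.eq_zero_or_pos with rfl | hk0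
  · simp [zero_pow hn.ne']
    positivity
  have hbase : 0 < (n : ℝ) / (exp 1 * L) := by positivity
  rw [← exp_log (pow_pos hbase n), ← exp_add, ← exp_log (pow_pos (Nat.cast_pos.2 hk0) _),
    exp_le_exp, log_pow, log_pow, Nat.cast_sub hk]
  exact sub_mul_log_le (Nat.cast_pos.2 hn) hL (Nat.cast_pos.2 hk0)

lemma bell_le_of_exp_sub_one_le {n : ℕ} (hn : 0 < n) {L δ : ℝ} (hL : 0 < L)
    (hδ : exp (L - 1) ≤ δ * n) : (bell n : ℝ) ≤ (2 * exp δ * n / (exp 1 * L)) ^ n := by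
  calc (bell n : ℝ) ≤ ∑ M : Finset (Fin n), (#M : ℝ) ^ (n - #M) := by
        exact_mod_cast bell_le_sum_card_pow n
    _ ≤ ∑ _M : Finset (Fin n), (n / (exp 1 * L)) ^ n * exp (exp (L - 1)) :=
        sum_le_sum fun M _ => natCast_pow_sub_le (by simpa using card_le_univ M) hn hL
    _ = 2 ^ n * ((n / (exp 1 * L)) ^ n * exp (exp (L - 1))) := by simp
    _ ≤ 2 ^ n * ((n / (exp 1 * L)) ^ n * exp δ ^ n) := by
        rw [← exp_nat_mul, mul_comm (n : ℝ)]
        gcongr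
    _ = (2 * exp δ * n / (exp 1 * L)) ^ n := by
        rw [mul_div_assoc, mul_pow, mul_pow]
        ring

lemma div_exp_pow_lt_pow_sub {r : ℝ} {n k : ℕ} (hr : 1 ≤ r) (hk : (k : ℝ) < r + 1)
    (hkn : k ≤ n) (h : (r + 1) * log r < n) : (r / exp 1) ^ n < r ^ (n - k) := by
  have hrk : r ^ k < exp 1 ^ n := by
    rw [exp_one_pow, ← exp_log (pow_pos (by linarith) k), log_pow, exp_lt_exp]
    calc (k : ℝ) * log r ≤ (r + 1) * log r := by gcongr; exact log_nonneg hr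
      _ < n := h
  calc (r / exp 1) ^ n = r ^ (n - k) * r ^ k / exp 1 ^ n := by
        rw [div_pow, ← pow_add, Nat.sub_add_cancel hkn]
    _ < r ^ (n - k) := by
        rw [div_lt_iff₀ (by positivity)]
        exact mul_lt_mul_of_pos_left hrk (by positivity)

lemma div_exp_pow_lt_bell {n : ℕ} {r : ℝ} (hr : 1 ≤ r) (hrn : r + 1 ≤ n)
    (h : (r + 1) * log r < n) : (r / exp 1) ^ n < bell n := by
  set k := ⌈r⌉₊
  have hk : (k : ℝ) < r + 1 := Nat.ceil_lt_add_one (by linarith)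
  have hkn : k ≤ n := by exact_mod_cast (hk.trans_le hrn).le
  calc (r / exp 1) ^ n < r ^ (n - k) := div_exp_pow_lt_pow_sub hr hk hkn h
    _ ≤ (k : ℝ) ^ (n - k) := by gcongr; exact Nat.le_ceil r
    _ ≤ bell n := by
        have := pow_le_bell_add k (n - k)
        rw [Nat.add_sub_cancel' hkn] at this
        exact_mod_cast this

lemma sq_le_exp {t : ℝ} (ht : 6 ≤ t) : t ^ 2 ≤ exp t := by
  have := pow_div_factorial_le_exp t (by linarith) 3
  norm_num [Nat.factorial] at this
  nlinarith

lemma div_log_add_one_mul_log_lt {x : ℝ} (hx : 0 < x) (ht : 6 ≤ log x) :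
    (x / log x + 1) * log (x / log x) < x := by
  set t := log x with ht_def
  have hs : 1 ≤ log t := by
    rw [le_log_iff_exp_le (by linarith)]
    linarith [exp_one_lt_d9]
  have hsq : t ^ 2 ≤ x := by simpa [ht_def, exp_log hx] using sq_le_exp ht
  have hr : t ≤ x / t := by rw [le_div_iff₀ (by linarith)]; nlinarith
  have hexpand : (x / t + 1) * (t - log t) = x - x / t * log t + (t - log t) := by
    field_simp
  rw [log_div hx.ne' (by linarith), ← ht_def, hexpand]
  nlinarith

lemma exp_mul_sub_one_le_mul_exp {t : ℝ} (ht : 3960 ≤ t) :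
    exp (0.95 * t - 1) ≤ 0.005 * exp t := by
  have h := add_one_le_exp (0.05 * t + 1)
  have hsplit : exp t = exp (0.95 * t - 1) * exp (0.05 * t + 1) := by rw [← exp_add]; ring_nf
  rw [hsplit]
  nlinarith [exp_pos (0.95 * t - 1)]

lemma two_mul_log_add_one_lt {x : ℝ} (hx : 1 ≤ x) (ht : 4000 ≤ log x) :
    2 * exp 0.005 * log (x + 1) < 0.792 * exp 1 * (0.95 * log x) := by
  have hlog : log (x + 1) ≤ log 2 + log x := by
    rw [← log_mul two_ne_zero (by linarith)]
    exact log_le_log (by linarith) (by linarith)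
  have hexp : exp 0.005 ≤ 1.01 := by
    have := abs_exp_sub_one_le (x := 0.005) (by norm_num [abs_of_pos])
    rw [abs_le] at this
    norm_num [abs_of_pos] at this
    linarith
  nlinarith [log_two_lt_d9, exp_one_gt_d9, exp_pos 0.005, log_nonneg (by linarith : (1:ℝ) ≤ x + 1)]

lemma div_exp_mul_log_pow_lt_bell {n : ℕ} (ht : 6 ≤ log n) :
    ((n : ℝ) / (exp 1 * log n)) ^ n < bell n := by
  have hn0 : (0 : ℝ) < n := Nat.cast_pos.2 (Nat.pos_of_ne_zero (by rintro rfl; norm_num at ht))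
  have hsq : log n ^ 2 ≤ n := by simpa [exp_log hn0] using sq_le_exp ht
  have hlog_le : log n ≤ n / 2 := by nlinarith
  have hdiv_le : (n : ℝ) / log n ≤ n / 2 :=
    div_le_div_of_nonneg_left hn0.le two_pos (by linarith)
  rw [mul_comm, ← div_div]
  refine div_exp_pow_lt_bell ?_ ?_ (div_log_add_one_mul_log_lt hn0 ht)
  · rw [le_div_iff₀ (by linarith)]
    linarith
  · linarith

lemma bell_lt_of_log_ge {n : ℕ} (ht : 4000 ≤ log n) :
    (bell n : ℝ) < (0.792 * n / log (n + 1)) ^ n := by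
  have hn : 0 < n := Nat.pos_of_ne_zero (by rintro rfl; norm_num at ht)
  have hn0 : (0 : ℝ) < n := Nat.cast_pos.2 hn
  have hn1 : (1 : ℝ) ≤ n := Nat.one_le_cast.2 hn
  have hδ : exp (0.95 * log n - 1) ≤ 0.005 * n := by
    simpa [exp_log hn0] using exp_mul_sub_one_le_mul_exp (t := log n) (by linarith)
  calc (bell n : ℝ) ≤ (2 * exp 0.005 * n / (exp 1 * (0.95 * log n))) ^ n :=
        bell_le_of_exp_sub_one_le hn (by linarith) hδ
    _ < _ := by
        refine pow_lt_pow_left₀ ?_ (by positivity) hn.ne'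
        rw [div_lt_div_iff₀ (by positivity) (log_pos (by linarith))]
        linear_combination (n : ℝ) * two_mul_log_add_one_lt hn1 ht

/-- Berend–Tassa bounds on the Bell numbers: for all sufficiently large `n`,
`(n/(e·ln n))^n < Bₙ < (0.792·n/ln(n+1))^n`. -/
theorem stmt_15 :
    ∃ N : ℕ, ∀ n : ℕ, N ≤ n →
      ((n : ℝ) / (Real.exp 1 * Real.log n)) ^ n < (bell n : ℝ) ∧
      (bell n : ℝ) < (0.792 * (n : ℝ) / Real.log ((n : ℝ) + 1)) ^ n := by
  refine ⟨⌈exp 4000⌉₊, fun n hn => ?_⟩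
  have hexp : exp 4000 ≤ n := (Nat.le_ceil _).trans (by exact_mod_cast hn)
  have ht : 4000 ≤ log n := (le_log_iff_exp_le ((exp_pos _).trans_le hexp)).2 hexp
  exact ⟨div_exp_mul_log_pow_lt_bell (by linarith), bell_lt_of_log_ge ht⟩
end
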